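/- arXiv:2111.06650 — 7 statements merged into one kernel-verified Lean document; each statement's English description precedes it below -/
import Mathlib

section
/- Let n ≥ 1 and let X_1, …, X_n be independent {0,1}-valued random variables on a probability space with Pr[X_i = 1] = p_i, where p_i ∈ [0, 1/2] for every i ∈ {1,…,n}. Let p = ∑_{i=1}^n p_i. Then Pr[∑_{i=1}^n X_i = 1] ≥ min(4^{−p}, p/4). -/
/-! The events "exactly `X i` equals one" are disjoint and, by independence, have probabilities
`p i * ∏ j ≠ i, (1 - p j) ≥ p i * ∏ j, (1 - p j)`, so `Pr[∑ X = 1] ≥ p * ∏ j, (1 - p j)`.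
On `[0, 1/2]` the convex function `t ↦ 4 ^ (-t)` lies below its chord `1 - t`, whence
`∏ j, (1 - p j) ≥ 4 ^ (-p)`; finally `p * 4 ^ (-p)` dominates `4 ^ (-p)` when `p ≥ 1` and `p / 4`
when `p ≤ 1`. -/

open MeasureTheory ProbabilityTheory Finset

namespace Real

lemma four_rpow_neg_le_one_sub {x : ℝ} (hx : x ∈ Set.Icc (0 : ℝ) (1 / 2)) :
    (4 : ℝ) ^ (-x) ≤ 1 - x := by
  obtain ⟨hx0, hx1⟩ := hx
  have h_half : (4 : ℝ) ^ (-(1 / 2) : ℝ) = 1 / 2 := by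
    rw [rpow_neg (by norm_num), ← sqrt_eq_rpow, show (4 : ℝ) = 2 ^ 2 by norm_num,
      sqrt_sq (by norm_num)]
    norm_num
  -- the chord of the convex function `t ↦ 4 ^ t` between `t = -1/2` and `t = 0`
  have hchord := (convexOn_rpow_left (b := 4) (by norm_num)).2 (Set.mem_univ 0)
    (Set.mem_univ (-(1 / 2))) (by linarith : 0 ≤ 1 - 2 * x) (by linarith : 0 ≤ 2 * x)
    (by ring)
  simp only [smul_eq_mul, rpow_zero, h_half] at hchord
  calc (4 : ℝ) ^ (-x) = 4 ^ ((1 - 2 * x) * 0 + 2 * x * (-(1 / 2))) := by ring_nf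
    _ ≤ 1 - x := by linarith

lemma four_rpow_neg_sum_le_prod_one_sub {ι : Type*} (s : Finset ι) {p : ι → ℝ}
    (hp : ∀ i ∈ s, p i ∈ Set.Icc (0 : ℝ) (1 / 2)) :
    (4 : ℝ) ^ (-∑ i ∈ s, p i) ≤ ∏ i ∈ s, (1 - p i) := by
  rw [← sum_neg_distrib, rpow_sum_of_pos (by norm_num)]
  exact prod_le_prod (fun i _ => rpow_nonneg (by norm_num) _)
    fun i hi => four_rpow_neg_le_one_sub (hp i hi)

lemma min_four_rpow_neg_div_four_le_mul {P : ℝ} (hP : 0 ≤ P) :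
    min ((4 : ℝ) ^ (-P)) (P / 4) ≤ P * 4 ^ (-P) := by
  rcases le_total P 1 with hP1 | hP1
  · have : (4 : ℝ)⁻¹ ≤ 4 ^ (-P) := by
      rw [← rpow_neg_one]
      exact rpow_le_rpow_of_exponent_le (by norm_num) (by linarith)
    calc min ((4 : ℝ) ^ (-P)) (P / 4) ≤ P * 4⁻¹ := by
          rw [← div_eq_mul_inv]; exact min_le_right _ _
      _ ≤ P * 4 ^ (-P) := mul_le_mul_of_nonneg_left this hP
  · exact (min_le_left _ _).trans (le_mul_of_one_le_left (rpow_nonneg (by norm_num) _) hP1)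

end Real

lemma min_four_rpow_neg_le_sum_mul_prod_erase {ι : Type*} [Fintype ι] [DecidableEq ι]
    {p : ι → ℝ} (hp : ∀ i, p i ∈ Set.Icc (0 : ℝ) (1 / 2)) :
    min ((4 : ℝ) ^ (-∑ i, p i)) ((∑ i, p i) / 4) ≤
      ∑ i, p i * ∏ j ∈ univ.erase i, (1 - p j) :=
  calc min ((4 : ℝ) ^ (-∑ i, p i)) ((∑ i, p i) / 4)
      ≤ (∑ i, p i) * 4 ^ (-∑ i, p i) :=
        Real.min_four_rpow_neg_div_four_le_mul (sum_nonneg fun i _ => (hp i).1)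
    _ ≤ ∑ i, p i * ∏ j, (1 - p j) := by
        rw [← sum_mul]
        exact mul_le_mul_of_nonneg_left
          (Real.four_rpow_neg_sum_le_prod_one_sub _ fun i _ => hp i)
          (sum_nonneg fun i _ => (hp i).1)
    _ ≤ ∑ i, p i * ∏ j ∈ univ.erase i, (1 - p j) := by
        refine sum_le_sum fun i _ => mul_le_mul_of_nonneg_left ?_ (hp i).1
        rw [← mul_prod_erase univ _ (mem_univ i)]
        exact mul_le_of_le_one_left (prod_nonneg fun j _ => by linarith [(hp j).2])
          (by linarith [(hp i).1])

section ExactlyOne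

variable {Ω ι : Type*} [MeasurableSpace Ω] {μ : Measure Ω} {X : ι → Ω → ℕ}

lemma ProbabilityTheory.iIndepFun.measure_forall_eq [Fintype ι] (hind : iIndepFun X μ)
    (v : ι → ℕ) : μ {ω | ∀ j, X j ω = v j} = ∏ j, μ {ω | X j ω = v j} := by
  rw [Set.ofPred_forall]
  exact hind.meas_iInter fun j => ⟨{v j}, measurableSet_singleton _, rfl⟩

lemma ProbabilityTheory.iIndepFun.measure_eq_single_one [Fintype ι] [DecidableEq ι]
    (hind : iIndepFun X μ) (i : ι) :
    μ {ω | ∀ j, X j ω = (Pi.single i 1 : ι → ℕ) j} =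
      μ {ω | X i ω = 1} * ∏ j ∈ univ.erase i, μ {ω | X j ω = 0} := by
  rw [hind.measure_forall_eq, ← mul_prod_erase univ _ (mem_univ i), Pi.single_eq_same]
  congr 1
  exact prod_congr rfl fun j hj => by rw [Pi.single_eq_of_ne (ne_of_mem_erase hj)]

lemma sum_measure_eq_single_one_le [Fintype ι] [DecidableEq ι]
    (hmeas : ∀ i, Measurable (X i)) :
    ∑ i, μ {ω | ∀ j, X j ω = (Pi.single i 1 : ι → ℕ) j} ≤ μ {ω | ∑ j, X j ω = 1} := by
  set A : ι → Set Ω := fun i => {ω | ∀ j, X j ω = (Pi.single i 1 : ι → ℕ) j}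
  have hdisj : Pairwise (Function.onFun Disjoint A) := fun i k hik =>
    Set.disjoint_left.2 fun ω hi hk => by
      simpa [Pi.single_eq_of_ne hik] using (hi i).symm.trans (hk i)
  have hmeasA : ∀ i, MeasurableSet (A i) := fun i => by
    simp only [A, Set.ofPred_forall]
    exact MeasurableSet.iInter fun j => hmeas j (measurableSet_singleton _)
  have hsub : ⋃ i, A i ⊆ {ω | ∑ j, X j ω = 1} := fun ω hω => by
    obtain ⟨i, hi⟩ := Set.mem_iUnion.1 hω
    show ∑ j, X j ω = 1
    rw [Fintype.sum_congr _ _ hi, Fintype.sum_pi_single']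
  calc ∑ i, μ (A i) = μ (⋃ i, A i) := by rw [measure_iUnion hdisj hmeasA, tsum_fintype]
    _ ≤ μ {ω | ∑ j, X j ω = 1} := measure_mono hsub

lemma measure_eq_zero_eq_one_sub [IsProbabilityMeasure μ] {Y : Ω → ℕ} (hY : Measurable Y)
    (h01 : ∀ ω, Y ω = 0 ∨ Y ω = 1) : μ {ω | Y ω = 0} = 1 - μ {ω | Y ω = 1} := by
  have : {ω | Y ω = 0} = {ω | Y ω = 1}ᶜ := by
    ext ω
    rcases h01 ω with h | h <;> simp [h]
  rw [this]
  exact prob_compl_eq_one_sub (hY (measurableSet_singleton 1))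

end ExactlyOne

theorem contention_success_lower_bound_general
    {Ω : Type*} [MeasurableSpace Ω] (μ : Measure Ω) [IsProbabilityMeasure μ]
    (n : ℕ) (X : Fin n → Ω → ℕ) (p : Fin n → ℝ)
    (hmeas : ∀ i, Measurable (X i))
    (hind : iIndepFun X μ)
    (h01 : ∀ i ω, X i ω = 0 ∨ X i ω = 1)
    (hp : ∀ i, μ {ω | X i ω = 1} = ENNReal.ofReal (p i))
    (hpI : ∀ i, p i ∈ Set.Icc (0 : ℝ) (1 / 2)) :
    ENNReal.ofReal (min ((4 : ℝ) ^ (-(∑ i, p i))) ((∑ i, p i) / 4)) ≤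
      μ {ω | (∑ i, X i ω) = 1} := by
  have hq : ∀ i, 0 ≤ 1 - p i := fun i => by linarith [(hpI i).2]
  have hexact : ∀ i, μ {ω | ∀ j, X j ω = (Pi.single i 1 : Fin n → ℕ) j} =
      ENNReal.ofReal (p i * ∏ j ∈ univ.erase i, (1 - p j)) := fun i => by
    rw [hind.measure_eq_single_one, hp, ENNReal.ofReal_mul (hpI i).1,
      ENNReal.ofReal_prod_of_nonneg fun j _ => hq j]
    refine congrArg _ (prod_congr rfl fun j _ => ?_)
    rw [measure_eq_zero_eq_one_sub (hmeas j) (h01 j), hp, ← ENNReal.ofReal_one,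
      ← ENNReal.ofReal_sub _ (hpI j).1]
  calc ENNReal.ofReal (min ((4 : ℝ) ^ (-(∑ i, p i))) ((∑ i, p i) / 4))
      ≤ ENNReal.ofReal (∑ i, p i * ∏ j ∈ univ.erase i, (1 - p j)) :=
        ENNReal.ofReal_le_ofReal (min_four_rpow_neg_le_sum_mul_prod_erase hpI)
    _ = ∑ i, μ {ω | ∀ j, X j ω = (Pi.single i 1 : Fin n → ℕ) j} := by
        rw [ENNReal.ofReal_sum_of_nonneg fun i _ =>
          mul_nonneg (hpI i).1 (prod_nonneg fun j _ => hq j)]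
        exact sum_congr rfl fun i _ => (hexact i).symm
    _ ≤ μ {ω | ∑ i, X i ω = 1} := sum_measure_eq_single_one_le hmeas

/-- For independent {0,1}-valued random variables `X i` with
`Pr[X i = 1] = p i ∈ [0, 1/2]`, and `p = ∑ i, p i`, we have
`Pr[∑ i, X i = 1] ≥ min (4 ^ (-p)) (p / 4)`. -/
theorem contention_success_lower_bound
    {Ω : Type*} [MeasurableSpace Ω] (μ : Measure Ω) [IsProbabilityMeasure μ]
    (n : ℕ) (hn : 1 ≤ n) (X : Fin n → Ω → ℕ) (p : Fin n → ℝ)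
    (hmeas : ∀ i, Measurable (X i))
    (hind : iIndepFun X μ)
    (h01 : ∀ i ω, X i ω = 0 ∨ X i ω = 1)
    (hp : ∀ i, μ {ω | X i ω = 1} = ENNReal.ofReal (p i))
    (hpI : ∀ i, p i ∈ Set.Icc (0 : ℝ) (1 / 2)) :
    ENNReal.ofReal (min ((4 : ℝ) ^ (-(∑ i, p i))) ((∑ i, p i) / 4)) ≤
      μ {ω | (∑ i, X i ω) = 1} :=
  contention_success_lower_bound_general μ n X p hmeas hind h01 hp hpI
end

section
/- Let n ≥ 1 and let X_1, …, X_n be independent {0,1}-valued random variables on a probability space with Pr[X_i = 1] = p_i, where p_i ∈ [0, 1] for every i ∈ {1,…,n}. Let p = ∑_{i=1}^n p_i. Then Pr[∑_{i=1}^n X_i = 1] ≥ p · ∏_{i=1}^n (1 − p_i). -/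
open MeasureTheory ProbabilityTheory Finset

/-!
Exactly one of the `X i` equals `1` as soon as `X i = 1` and `X j = 0` for all `j ≠ i`.
These `n` events are disjoint and, by independence, have probabilities
`p i * ∏_{j ≠ i} (1 - p j)`; each of these is at least `p i * ∏_j (1 - p j)`
because the omitted factor `1 - p i` lies in `[0, 1]`.
-/

theorem Finset.sum_mul_prod_one_sub_le_sum_mul_prod_erase {ι : Type*} [DecidableEq ι]
    (s : Finset ι) (q : ι → ℝ) (hq : ∀ i ∈ s, q i ∈ Set.Icc (0 : ℝ) 1) :
    (∑ i ∈ s, q i) * ∏ i ∈ s, (1 - q i) ≤ ∑ i ∈ s, q i * ∏ j ∈ s.erase i, (1 - q j) := by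
  rw [sum_mul]
  refine sum_le_sum fun i hi => mul_le_mul_of_nonneg_left ?_ (hq i hi).1
  refine prod_le_prod_of_subset_of_le_one (erase_subset i s) (fun j hj => ?_) (fun j hj _ => ?_)
  · linarith [(hq j hj).2]
  · linarith [(hq j hj).1]

section

variable {Ω ι : Type*} [MeasurableSpace Ω] {μ : Measure Ω} [Fintype ι] [DecidableEq ι]

theorem sum_measure_eq_piSingle_le_measure_sum_eq_one {X : ι → Ω → ℕ}
    (hmeas : ∀ i, Measurable (X i)) :
    ∑ i, μ {ω | (fun j => X j ω) = Pi.single i 1} ≤ μ {ω | ∑ i, X i ω = 1} := by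
  have hdisj : Set.PairwiseDisjoint (↑(univ : Finset ι))
      fun i => {ω | (fun j => X j ω) = Pi.single i 1} := by
    intro i _ k _ hik
    refine Set.disjoint_left.2 fun ω hi hk => ?_
    have := congrFun (hi.symm.trans hk) i
    simp [hik] at this
  rw [← measure_biUnion_finset hdisj fun i _ =>
    measurable_pi_iff.2 hmeas (measurableSet_singleton _)]
  refine measure_mono (Set.iUnion₂_subset fun i _ ω hω => ?_)
  change (fun j => X j ω) = Pi.single i 1 at hω
  change ∑ j, X j ω = 1
  simp [congrFun hω]

theorem measure_eq_zero_eq_ofReal_one_sub [IsProbabilityMeasure μ] {Y : Ω → ℕ}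
    (hY : Measurable Y) (h01 : ∀ ω, Y ω = 0 ∨ Y ω = 1) {q : ℝ} (hq : 0 ≤ q)
    (hYq : μ {ω | Y ω = 1} = ENNReal.ofReal q) :
    μ {ω | Y ω = 0} = ENNReal.ofReal (1 - q) := by
  have hcompl : {ω | Y ω = 0} = {ω | Y ω = 1}ᶜ := by
    ext ω
    rcases h01 ω with h | h <;> simp [h]
  have hmeas1 : MeasurableSet {ω | Y ω = 1} := hY (measurableSet_singleton 1)
  rw [hcompl, prob_compl_eq_one_sub hmeas1, hYq,
    ENNReal.ofReal_sub _ hq, ENNReal.ofReal_one]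

theorem ProbabilityTheory.iIndepFun.measure_eq_piSingle [IsProbabilityMeasure μ]
    {X : ι → Ω → ℕ} {p : ι → ℝ} (hind : iIndepFun X μ) (hmeas : ∀ i, Measurable (X i))
    (h01 : ∀ i ω, X i ω = 0 ∨ X i ω = 1)
    (hp : ∀ i, μ {ω | X i ω = 1} = ENNReal.ofReal (p i))
    (hpI : ∀ i, p i ∈ Set.Icc (0 : ℝ) 1) (i : ι) :
    μ {ω | (fun j => X j ω) = Pi.single i 1} =
      ENNReal.ofReal (p i * ∏ j ∈ univ.erase i, (1 - p j)) := by
  have hinter : {ω | (fun j => X j ω) = Pi.single i 1} =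
      ⋂ j, X j ⁻¹' {(Pi.single i 1 : ι → ℕ) j} := by
    ext ω
    simp [funext_iff]
  rw [hinter, hind.meas_iInter fun j => ⟨_, measurableSet_singleton _, rfl⟩,
    ← mul_prod_erase univ _ (mem_univ i), ENNReal.ofReal_mul (hpI i).1,
    ENNReal.ofReal_prod_of_nonneg fun j _ => sub_nonneg.2 (hpI j).2]
  congr 1
  · rw [Pi.single_eq_same]
    exact hp i
  · refine prod_congr rfl fun j hj => ?_
    rw [Pi.single_eq_of_ne (ne_of_mem_erase hj)]
    exact measure_eq_zero_eq_ofReal_one_sub (hmeas j) (h01 j) (hpI j).1 (hp j)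

end

theorem contention_success_product_lower_bound_general
    {Ω : Type*} [MeasurableSpace Ω] (μ : Measure Ω) [IsProbabilityMeasure μ]
    (n : ℕ) (X : Fin n → Ω → ℕ) (p : Fin n → ℝ)
    (hmeas : ∀ i, Measurable (X i))
    (hind : iIndepFun X μ)
    (h01 : ∀ i ω, X i ω = 0 ∨ X i ω = 1)
    (hp : ∀ i, μ {ω | X i ω = 1} = ENNReal.ofReal (p i))
    (hpI : ∀ i, p i ∈ Set.Icc (0 : ℝ) 1) :
    ENNReal.ofReal ((∑ i, p i) * ∏ i, (1 - p i)) ≤ μ {ω | (∑ i, X i ω) = 1} := by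
  calc ENNReal.ofReal ((∑ i, p i) * ∏ i, (1 - p i))
      ≤ ENNReal.ofReal (∑ i, p i * ∏ j ∈ univ.erase i, (1 - p j)) :=
        ENNReal.ofReal_le_ofReal <|
          univ.sum_mul_prod_one_sub_le_sum_mul_prod_erase p fun i _ => hpI i
    _ = ∑ i, μ {ω | (fun j => X j ω) = Pi.single i 1} := by
        rw [ENNReal.ofReal_sum_of_nonneg fun i _ =>
          mul_nonneg (hpI i).1 (prod_nonneg fun j _ => sub_nonneg.2 (hpI j).2)]
        exact sum_congr rfl fun i _ =>
          (hind.measure_eq_piSingle hmeas h01 hp hpI i).symm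
    _ ≤ μ {ω | (∑ i, X i ω) = 1} := sum_measure_eq_piSingle_le_measure_sum_eq_one hmeas

/-- For independent {0,1}-valued random variables `X i` with
`Pr[X i = 1] = p i ∈ [0, 1]`, and `p = ∑ i, p i`, we have
`Pr[∑ i, X i = 1] ≥ p * ∏ i, (1 - p i)`. -/
theorem contention_success_product_lower_bound
    {Ω : Type*} [MeasurableSpace Ω] (μ : Measure Ω) [IsProbabilityMeasure μ]
    (n : ℕ) (hn : 1 ≤ n) (X : Fin n → Ω → ℕ) (p : Fin n → ℝ)
    (hmeas : ∀ i, Measurable (X i))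
    (hind : iIndepFun X μ)
    (h01 : ∀ i ω, X i ω = 0 ∨ X i ω = 1)
    (hp : ∀ i, μ {ω | X i ω = 1} = ENNReal.ofReal (p i))
    (hpI : ∀ i, p i ∈ Set.Icc (0 : ℝ) 1) :
    ENNReal.ofReal ((∑ i, p i) * ∏ i, (1 - p i)) ≤ μ {ω | (∑ i, X i ω) = 1} :=
  contention_success_product_lower_bound_general μ n X p hmeas hind h01 hp hpI
end

section
/- Let n ≥ 1 and let X_1, …, X_n be independent {0,1}-valued random variables on a probability space with Pr[X_i = 1] = p_i, where p_i ∈ [0, 1] for every i ∈ {1,…,n}. Let p = ∑_{i=1}^n p_i. If λ ≥ 1 is a real number and p ≥ 2·ln(λ) + 2, then Pr[∑_{i=1}^n X_i = 1] ≤ 1/λ. -/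
/-!
A success means that exactly one `X i` equals `1`, so by the union bound and independence its
probability is at most `∑ i, p i * ∏ j ≠ i, (1 - p j) ≤ ∑ i, p i * exp (p i - p) ≤ p * exp (1 - p)`.
Since `p ≤ exp (p / 2)`, this is at most `exp (1 - p / 2)`, which is `≤ 1 / λ` once
`p ≥ 2 log λ + 2`.
-/

open MeasureTheory ProbabilityTheory Finset

namespace Real

lemma le_exp_half (t : ℝ) : t ≤ exp (t / 2) := by
  have hsq : exp (t / 2) = exp (t / 4) ^ 2 := by rw [sq, ← exp_add]; ring_nf
  -- `(1 + t/4)^2 - t = (1 - t/4)^2`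
  nlinarith [add_one_le_exp (t / 4), sq_nonneg (1 - t / 4)]

lemma mul_exp_one_sub_le (t : ℝ) : t * exp (1 - t) ≤ exp (1 - t / 2) :=
  calc t * exp (1 - t) ≤ exp (t / 2) * exp (1 - t) := by gcongr; exact le_exp_half t
    _ = exp (1 - t / 2) := by rw [← exp_add]; ring_nf

lemma prod_one_sub_le_exp_neg_sum {ι : Type*} (s : Finset ι) {p : ι → ℝ} (hp : ∀ j ∈ s, p j ≤ 1) :
    ∏ j ∈ s, (1 - p j) ≤ exp (-∑ j ∈ s, p j) := by
  rw [← sum_neg_distrib, exp_sum]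
  exact prod_le_prod (fun j hj => sub_nonneg.mpr (hp j hj)) fun j _ => one_sub_le_exp_neg (p j)

lemma sum_mul_prod_erase_one_sub_le {ι : Type*} [Fintype ι] [DecidableEq ι] {p : ι → ℝ}
    (hp : ∀ i, p i ∈ Set.Icc 0 1) :
    ∑ i, p i * ∏ j ∈ univ.erase i, (1 - p j) ≤ (∑ i, p i) * exp (1 - ∑ i, p i) := by
  rw [sum_mul]
  refine sum_le_sum fun i _ => mul_le_mul_of_nonneg_left ?_ (hp i).1
  calc ∏ j ∈ univ.erase i, (1 - p j) ≤ exp (-∑ j ∈ univ.erase i, p j) :=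
        prod_one_sub_le_exp_neg_sum _ fun j _ => (hp j).2
    _ ≤ exp (1 - ∑ i, p i) := by
        rw [← add_sum_erase univ p (mem_univ i)]
        gcongr
        linarith [(hp i).2]

end Real
lemma Nat.exists_eq_ite_of_sum_eq_one {ι : Type*} [Fintype ι] [DecidableEq ι] {f : ι → ℕ}
    (hf : ∑ i, f i = 1) : ∃ i, ∀ j, f j = if j = i then 1 else 0 := by
  obtain ⟨i, hi⟩ : ∃ i, f i ≠ 0 := by
    by_contra! h
    simp [h] at hf
  have hsplit := add_sum_erase univ f (mem_univ i)
  have hrest : ∑ j ∈ univ.erase i, f j = 0 := by omega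
  refine ⟨i, fun j => ?_⟩
  split_ifs with hj
  · subst hj; omega
  · exact sum_eq_zero_iff.mp hrest j (mem_erase.mpr ⟨hj, mem_univ j⟩)

lemma measure_sum_eq_one_le {ι Ω : Type*} [Fintype ι] [DecidableEq ι] [MeasurableSpace Ω]
    {μ : Measure Ω} {X : ι → Ω → ℕ} (hX : iIndepFun X μ) :
    μ {ω | ∑ i, X i ω = 1} ≤ ∑ i, μ {ω | X i ω = 1} * ∏ j ∈ univ.erase i, μ {ω | X j ω = 0} := by
  have hsub : {ω | ∑ i, X i ω = 1} ⊆ ⋃ i, ⋂ j ∈ univ, X j ⁻¹' {if j = i then 1 else 0} := by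
    intro ω hω
    obtain ⟨i, hi⟩ := Nat.exists_eq_ite_of_sum_eq_one hω
    simpa using ⟨i, hi⟩
  refine (measure_mono hsub).trans ((measure_iUnion_fintype_le _ _).trans_eq ?_)
  refine sum_congr rfl fun i _ => ?_
  rw [hX.measure_inter_preimage_eq_mul univ (by simp), ← mul_prod_erase univ _ (mem_univ i)]
  congr 1
  · simp [Set.preimage]
  · refine prod_congr rfl fun j hj => ?_
    simp [Set.preimage, (mem_erase.mp hj).1]

lemma measure_setOf_eq_zero_eq_one_sub {Ω : Type*} [MeasurableSpace Ω] {μ : Measure Ω}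
    [IsProbabilityMeasure μ] {Y : Ω → ℕ} (hY : Measurable Y) (h01 : ∀ ω, Y ω = 0 ∨ Y ω = 1) :
    μ {ω | Y ω = 0} = 1 - μ {ω | Y ω = 1} := by
  have hcompl : {ω | Y ω = 0} = {ω | Y ω = 1}ᶜ := by
    ext ω
    rcases h01 ω with h | h <;> simp [h]
  exact hcompl ▸ prob_compl_eq_one_sub (hY (measurableSet_singleton 1))

theorem high_contention_no_success_general
    {Ω : Type*} [MeasurableSpace Ω] (μ : Measure Ω) [IsProbabilityMeasure μ]
    (n : ℕ) (X : Fin n → Ω → ℕ) (p : Fin n → ℝ)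
    (hmeas : ∀ i, Measurable (X i))
    (hind : iIndepFun X μ)
    (h01 : ∀ i ω, X i ω = 0 ∨ X i ω = 1)
    (hp : ∀ i, μ {ω | X i ω = 1} = ENNReal.ofReal (p i))
    (hpI : ∀ i, p i ∈ Set.Icc (0 : ℝ) 1)
    (lam : ℝ) (hlam : 1 ≤ lam)
    (hbig : 2 * Real.log lam + 2 ≤ ∑ i, p i) :
    μ {ω | (∑ i, X i ω) = 1} ≤ ENNReal.ofReal (1 / lam) := by
  classical
  have hq : ∀ i, μ {ω | X i ω = 0} = ENNReal.ofReal (1 - p i) := fun i => by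
    rw [measure_setOf_eq_zero_eq_one_sub (hmeas i) (h01 i), hp, ← ENNReal.ofReal_one,
      ENNReal.ofReal_sub _ (hpI i).1]
  have hq_nonneg : ∀ j, 0 ≤ 1 - p j := fun j => sub_nonneg.mpr (hpI j).2
  set P := ∑ i, p i
  calc μ {ω | (∑ i, X i ω) = 1}
      ≤ ∑ i, μ {ω | X i ω = 1} * ∏ j ∈ univ.erase i, μ {ω | X j ω = 0} :=
        measure_sum_eq_one_le hind
    _ = ENNReal.ofReal (∑ i, p i * ∏ j ∈ univ.erase i, (1 - p j)) := by
        simp_rw [hp, hq, ← ENNReal.ofReal_prod_of_nonneg fun j _ => hq_nonneg j,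
          ← ENNReal.ofReal_mul (hpI _).1]
        exact (ENNReal.ofReal_sum_of_nonneg fun i _ =>
          mul_nonneg (hpI i).1 (prod_nonneg fun j _ => hq_nonneg j)).symm
    _ ≤ ENNReal.ofReal (1 / lam) := by
        refine ENNReal.ofReal_le_ofReal ?_
        calc ∑ i, p i * ∏ j ∈ univ.erase i, (1 - p j) ≤ P * Real.exp (1 - P) :=
              Real.sum_mul_prod_erase_one_sub_le hpI
          _ ≤ Real.exp (1 - P / 2) := Real.mul_exp_one_sub_le P
          _ ≤ Real.exp (-Real.log lam) := by gcongr; linarith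
          _ = 1 / lam := by rw [Real.exp_neg, Real.exp_log (by linarith), one_div]

/-- For independent {0,1}-valued random variables `X i` with
`Pr[X i = 1] = p i ∈ [0, 1]` and `p = ∑ i, p i`, if `lam ≥ 1` and
`p ≥ 2 * ln lam + 2`, then `Pr[∑ i, X i = 1] ≤ 1 / lam`. -/
theorem high_contention_no_success
    {Ω : Type*} [MeasurableSpace Ω] (μ : Measure Ω) [IsProbabilityMeasure μ]
    (n : ℕ) (hn : 1 ≤ n) (X : Fin n → Ω → ℕ) (p : Fin n → ℝ)
    (hmeas : ∀ i, Measurable (X i))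
    (hind : iIndepFun X μ)
    (h01 : ∀ i ω, X i ω = 0 ∨ X i ω = 1)
    (hp : ∀ i, μ {ω | X i ω = 1} = ENNReal.ofReal (p i))
    (hpI : ∀ i, p i ∈ Set.Icc (0 : ℝ) 1)
    (lam : ℝ) (hlam : 1 ≤ lam)
    (hbig : 2 * Real.log lam + 2 ≤ ∑ i, p i) :
    μ {ω | (∑ i, X i ω) = 1} ≤ ENNReal.ofReal (1 / lam) :=
  high_contention_no_success_general μ n X p hmeas hind h01 hp hpI lam hlam hbig
end

section
/- Let n ≥ 1 and let X_1, …, X_n be independent {0,1}-valued random variables on a probability space with Pr[X_i = 1] = p_i, where p_i ∈ [0, 1/2] for every i ∈ {1,…,n}. Let p = ∑_{i=1}^n p_i. If 1/4 ≤ p ≤ 2, then Pr[∑_{i=1}^n X_i = 1] ≥ 1/16. -/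
/-!
Exactly one of the `X i` equals `1` with probability `∑ i, p i * ∏ j ≠ i, (1 - p j)`, which is at
least `P * ∏ j, (1 - p j)` for `P = ∑ i, p i`. On `[0, 1/2]` the line `1 - x` lies above the
convex function `(1/4) ^ x`, which meets it at both endpoints, so `∏ j, (1 - p j) ≥ (1/4) ^ P`.
Finally `P * (1/4) ^ P ≥ 1/16` on `[1/4, 2]`, since `(1/4) ^ P` is at least `1/4` for `P ≤ 1` and
at least `1/16` for `P ≤ 2`.
-/

open MeasureTheory ProbabilityTheory Finset

theorem Real.rpow_div_le_one_sub {a x : ℝ} (ha : a < 1) (hx₀ : 0 ≤ x) (hxa : x ≤ a) :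
    (1 - a) ^ (x / a) ≤ 1 - x := by
  obtain rfl | ha₀ := hx₀.trans hxa |>.eq_or_lt
  · simp [le_antisymm hxa hx₀]
  have ht₀ : 0 ≤ x / a := div_nonneg hx₀ ha₀.le
  have ht₁ : x / a ≤ 1 := div_le_one_of_le₀ hxa ha₀.le
  have := (convexOn_rpow_left (b := 1 - a) (by linarith)).2 (Set.mem_univ 0) (Set.mem_univ 1)
    (sub_nonneg.2 ht₁) ht₀ (by ring)
  simp only [smul_eq_mul, mul_zero, mul_one, zero_add, Real.rpow_zero, Real.rpow_one] at this
  calc (1 - a) ^ (x / a) ≤ 1 - x / a + x / a * (1 - a) := this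
    _ = 1 - x := by field_simp; ring

theorem Real.rpow_sum_div_le_prod_one_sub {ι : Type*} (s : Finset ι) {a : ℝ} (ha : a < 1)
    {p : ι → ℝ} (hp : ∀ i ∈ s, p i ∈ Set.Icc 0 a) :
    (1 - a) ^ ((∑ i ∈ s, p i) / a) ≤ ∏ i ∈ s, (1 - p i) := by
  rw [sum_div, Real.rpow_sum_of_pos (by linarith)]
  exact prod_le_prod (fun i _ => by positivity) fun i hi =>
    Real.rpow_div_le_one_sub ha (hp i hi).1 (hp i hi).2

theorem Finset.sum_mul_prod_one_sub_le {ι : Type*} [DecidableEq ι] (s : Finset ι) {p : ι → ℝ}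
    (hp : ∀ i ∈ s, p i ∈ Set.Icc 0 1) :
    (∑ i ∈ s, p i) * ∏ j ∈ s, (1 - p j) ≤ ∑ i ∈ s, p i * ∏ j ∈ s.erase i, (1 - p j) := by
  rw [sum_mul]
  refine sum_le_sum fun i hi => mul_le_mul_of_nonneg_left ?_ (hp i hi).1
  rw [← mul_prod_erase s _ hi]
  have : 0 ≤ ∏ j ∈ s.erase i, (1 - p j) :=
    prod_nonneg fun j hj => sub_nonneg.2 (hp j (mem_of_mem_erase hj)).2
  nlinarith [(hp i hi).1]

theorem one_div_sixteen_le_mul_rpow {x : ℝ} (h₁ : 1 / 4 ≤ x) (h₂ : x ≤ 2) :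
    1 / 16 ≤ x * (1 / 4) ^ x := by
  rcases le_total x 1 with hx | hx
  · have : (1 / 4 : ℝ) ^ (1 : ℝ) ≤ (1 / 4) ^ x :=
      Real.rpow_le_rpow_of_exponent_ge (by norm_num) (by norm_num) hx
    rw [Real.rpow_one] at this
    nlinarith
  · have : (1 / 4 : ℝ) ^ (2 : ℝ) ≤ (1 / 4) ^ x :=
      Real.rpow_le_rpow_of_exponent_ge (by norm_num) (by norm_num) h₂
    norm_num at this
    nlinarith

theorem Finset.one_div_sixteen_le_sum_mul_prod_erase {ι : Type*} [DecidableEq ι] (s : Finset ι)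
    {p : ι → ℝ} (hp : ∀ i ∈ s, p i ∈ Set.Icc 0 (1 / 2))
    (hlo : 1 / 4 ≤ ∑ i ∈ s, p i) (hhi : ∑ i ∈ s, p i ≤ 2) :
    1 / 16 ≤ ∑ i ∈ s, p i * ∏ j ∈ s.erase i, (1 - p j) := by
  have hbase : ((1 : ℝ) - 1 / 2) ^ ((∑ i ∈ s, p i) / (1 / 2)) = (1 / 4) ^ ∑ i ∈ s, p i := by
    rw [div_div_eq_mul_div, div_one, mul_comm, Real.rpow_mul (by norm_num)]
    norm_num
  calc (1 / 16 : ℝ) ≤ (∑ i ∈ s, p i) * (1 / 4) ^ ∑ i ∈ s, p i := one_div_sixteen_le_mul_rpow hlo hhi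
    _ ≤ (∑ i ∈ s, p i) * ∏ j ∈ s, (1 - p j) := by
      rw [← hbase]
      gcongr
      exact Real.rpow_sum_div_le_prod_one_sub s (by norm_num) hp
    _ ≤ ∑ i ∈ s, p i * ∏ j ∈ s.erase i, (1 - p j) :=
      s.sum_mul_prod_one_sub_le fun i hi => ⟨(hp i hi).1, (hp i hi).2.trans (by norm_num)⟩

theorem Fintype.sum_eq_one_iff_eq_single {ι : Type*} [Fintype ι] [DecidableEq ι] (f : ι → ℕ) :
    ∑ i, f i = 1 ↔ ∃ i, f = Pi.single i 1 := by
  have := Finsupp.sum_eq_one_iff (Finsupp.equivFunOnFinite.symm f)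
  rw [Finsupp.sum_fintype _ _ (fun _ => rfl)] at this
  simpa [← Finsupp.equivFunOnFinite_symm_single, Equiv.apply_eq_iff_eq] using this

theorem ProbabilityTheory.iIndepFun.measure_sum_eq_one {Ω ι : Type*} [MeasurableSpace Ω]
    {μ : Measure Ω} [Fintype ι] [DecidableEq ι] {X : ι → Ω → ℕ} (hmeas : ∀ i, Measurable (X i))
    (hind : iIndepFun X μ) :
    μ {ω | ∑ i, X i ω = 1} = ∑ i, ∏ j, μ (X j ⁻¹' {(Pi.single i 1 : ι → ℕ) j}) := by
  have hunion : {ω | ∑ i, X i ω = 1} = ⋃ i, ⋂ j, X j ⁻¹' {(Pi.single i 1 : ι → ℕ) j} := by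
    ext ω
    simp [Fintype.sum_eq_one_iff_eq_single (X · ω), funext_iff]
  have hdisj :
      Pairwise (Function.onFun Disjoint fun i => ⋂ j, X j ⁻¹' {(Pi.single i 1 : ι → ℕ) j}) := by
    intro i k hik
    refine Set.disjoint_left.2 fun ω hi hk => ?_
    simp only [Set.mem_iInter, Set.mem_preimage, Set.mem_singleton_iff] at hi hk
    simpa [hi i, Pi.single_eq_of_ne hik] using hk i
  rw [hunion, measure_iUnion hdisj fun i => .iInter fun j => hmeas j (measurableSet_singleton _),
    tsum_fintype]
  exact sum_congr rfl fun i _ => hind.meas_iInter fun j => ⟨_, measurableSet_singleton _, rfl⟩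

theorem measure_preimage_zero_of_bernoulli {Ω : Type*} [MeasurableSpace Ω] {μ : Measure Ω}
    [IsProbabilityMeasure μ] {Y : Ω → ℕ} {q : ℝ} (hY : Measurable Y)
    (h01 : ∀ ω, Y ω = 0 ∨ Y ω = 1) (hq : μ (Y ⁻¹' {1}) = ENNReal.ofReal q) (hq₀ : 0 ≤ q) :
    μ (Y ⁻¹' {0}) = ENNReal.ofReal (1 - q) := by
  have hcompl : Y ⁻¹' {0} = (Y ⁻¹' {1})ᶜ := by
    ext ω
    rcases h01 ω with h | h <;> simp [h]
  rw [hcompl, prob_compl_eq_one_sub (hY (measurableSet_singleton 1)), hq,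
    ENNReal.ofReal_sub _ hq₀, ENNReal.ofReal_one]

theorem ProbabilityTheory.iIndepFun.measure_sum_eq_one_of_bernoulli {Ω ι : Type*}
    [MeasurableSpace Ω] {μ : Measure Ω} [IsProbabilityMeasure μ] [Fintype ι] [DecidableEq ι]
    {X : ι → Ω → ℕ} {p : ι → ℝ} (hmeas : ∀ i, Measurable (X i)) (hind : iIndepFun X μ)
    (h01 : ∀ i ω, X i ω = 0 ∨ X i ω = 1) (hp : ∀ i, μ (X i ⁻¹' {1}) = ENNReal.ofReal (p i))
    (hpI : ∀ i, p i ∈ Set.Icc 0 1) :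
    μ {ω | ∑ i, X i ω = 1} = ENNReal.ofReal (∑ i, p i * ∏ j ∈ univ.erase i, (1 - p j)) := by
  have hq : ∀ j, 0 ≤ 1 - p j := fun j => sub_nonneg.2 (hpI j).2
  rw [hind.measure_sum_eq_one hmeas, ENNReal.ofReal_sum_of_nonneg fun i _ =>
    mul_nonneg (hpI i).1 (prod_nonneg fun j _ => hq j)]
  refine sum_congr rfl fun i _ => ?_
  rw [← mul_prod_erase univ _ (mem_univ i), ENNReal.ofReal_mul (hpI i).1,
    ENNReal.ofReal_prod_of_nonneg fun j _ => hq j, Pi.single_eq_same, hp i]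
  refine congrArg _ (prod_congr rfl fun j hj => ?_)
  rw [Pi.single_eq_of_ne (ne_of_mem_erase hj)]
  exact measure_preimage_zero_of_bernoulli (hmeas j) (h01 j) (hp j) (hpI j).1

theorem constant_contention_success_general
    {Ω : Type*} [MeasurableSpace Ω] (μ : Measure Ω) [IsProbabilityMeasure μ]
    (n : ℕ) (X : Fin n → Ω → ℕ) (p : Fin n → ℝ)
    (hmeas : ∀ i, Measurable (X i))
    (hind : iIndepFun X μ)
    (h01 : ∀ i ω, X i ω = 0 ∨ X i ω = 1)
    (hp : ∀ i, μ {ω | X i ω = 1} = ENNReal.ofReal (p i))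
    (hpI : ∀ i, p i ∈ Set.Icc (0 : ℝ) (1 / 2))
    (hlo : 1 / 4 ≤ ∑ i, p i) (hhi : ∑ i, p i ≤ 2) :
    ENNReal.ofReal (1 / 16 : ℝ) ≤ μ {ω | (∑ i, X i ω) = 1} := by
  rw [hind.measure_sum_eq_one_of_bernoulli hmeas h01 hp
    fun i => ⟨(hpI i).1, (hpI i).2.trans (by norm_num)⟩]
  exact ENNReal.ofReal_le_ofReal <|
    univ.one_div_sixteen_le_sum_mul_prod_erase (fun i _ => hpI i) hlo hhi

/-- For independent {0,1}-valued random variables `X i` with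
`Pr[X i = 1] = p i ∈ [0, 1/2]` and `p = ∑ i, p i`, if `1/4 ≤ p ≤ 2`, then
`Pr[∑ i, X i = 1] ≥ 1/16`. -/
theorem constant_contention_success
    {Ω : Type*} [MeasurableSpace Ω] (μ : Measure Ω) [IsProbabilityMeasure μ]
    (n : ℕ) (hn : 1 ≤ n) (X : Fin n → Ω → ℕ) (p : Fin n → ℝ)
    (hmeas : ∀ i, Measurable (X i))
    (hind : iIndepFun X μ)
    (h01 : ∀ i ω, X i ω = 0 ∨ X i ω = 1)
    (hp : ∀ i, μ {ω | X i ω = 1} = ENNReal.ofReal (p i))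
    (hpI : ∀ i, p i ∈ Set.Icc (0 : ℝ) (1 / 2))
    (hlo : 1 / 4 ≤ ∑ i, p i) (hhi : ∑ i, p i ≤ 2) :
    ENNReal.ofReal (1 / 16 : ℝ) ≤ μ {ω | (∑ i, X i ω) = 1} :=
  constant_contention_success_general μ n X p hmeas hind h01 hp hpI hlo hhi
end

section
/- Let n ≥ 1 and let X_1, …, X_n be independent {0,1}-valued random variables on a probability space with Pr[X_i = 1] = p_i, where p_i ∈ [0, 1/2] for every i ∈ {1,…,n}. Let p = ∑_{i=1}^n p_i. If p ≤ 1, then Pr[∑_{i=1}^n X_i = 1] ≥ p/4. -/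
/-!
The event that exactly one `X i` equals `1` contains the disjoint events "`X i = 1` and every other
`X j = 0`", whose probabilities are `p i * ∏ j ≠ i, (1 - p j)` by independence. Since `4⁻¹ ^ x` is
convex and agrees with `1 - x` at `x = 0` and `x = 1 / 2`, each `1 - p j` is at least `4⁻¹ ^ p j`,
so the product is at least `4⁻¹ ^ (∑ j, p j) ≥ 4⁻¹`.
-/

open MeasureTheory ProbabilityTheory Finset

lemma Real.inv_four_rpow_le_one_sub {x : ℝ} (h₀ : 0 ≤ x) (h₁ : x ≤ 1 / 2) :
    (4 : ℝ)⁻¹ ^ x ≤ 1 - x := by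
  have h := (convexOn_rpow_left (b := (4 : ℝ)⁻¹) (by norm_num)).2 (Set.mem_univ 0)
    (Set.mem_univ (1 / 2)) (by linarith : 0 ≤ 1 - 2 * x) (by linarith : 0 ≤ 2 * x)
    (by ring : 1 - 2 * x + 2 * x = 1)
  have half : (4 : ℝ)⁻¹ ^ (1 / 2 : ℝ) = 1 / 2 := by
    rw [Real.inv_rpow (by norm_num), show (4 : ℝ) = 2 ^ (2 : ℝ) by norm_num,
      ← Real.rpow_mul (by norm_num)]
    norm_num
  simp only [smul_eq_mul, Real.rpow_zero, half] at h
  calc (4 : ℝ)⁻¹ ^ x = (4 : ℝ)⁻¹ ^ ((1 - 2 * x) * 0 + 2 * x * (1 / 2)) := by ring_nf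
    _ ≤ (1 - 2 * x) * 1 + 2 * x * (1 / 2) := h
    _ = 1 - x := by ring

lemma inv_four_le_prod_one_sub {ι : Type*} {s : Finset ι} {p : ι → ℝ}
    (hp : ∀ i ∈ s, p i ∈ Set.Icc (0 : ℝ) (1 / 2)) (hsum : ∑ i ∈ s, p i ≤ 1) :
    (4 : ℝ)⁻¹ ≤ ∏ i ∈ s, (1 - p i) :=
  calc (4 : ℝ)⁻¹ = (4 : ℝ)⁻¹ ^ (1 : ℝ) := (Real.rpow_one _).symm
    _ ≤ (4 : ℝ)⁻¹ ^ ∑ i ∈ s, p i :=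
      Real.rpow_le_rpow_of_exponent_ge (by norm_num) (by norm_num) hsum
    _ = ∏ i ∈ s, (4 : ℝ)⁻¹ ^ p i := Real.rpow_sum_of_pos (by norm_num) _ _
    _ ≤ ∏ i ∈ s, (1 - p i) := prod_le_prod (fun i _ => by positivity)
      fun i hi => Real.inv_four_rpow_le_one_sub (hp i hi).1 (hp i hi).2

section

variable {Ω : Type*} [MeasurableSpace Ω] {μ : Measure Ω}

lemma ProbabilityTheory.iIndepFun.measure_eq_pi {ι : Type*} [Fintype ι] {β : Type*}
    [MeasurableSpace β] [MeasurableSingletonClass β] {X : ι → Ω → β} (hX : iIndepFun X μ)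
    (x : ι → β) : μ {ω | (fun i => X i ω) = x} = ∏ i, μ (X i ⁻¹' {x i}) := by
  rw [← hX.meas_iInter fun i => ⟨{x i}, measurableSet_singleton _, rfl⟩]
  congr 1
  ext ω
  simp [funext_iff]

lemma sum_measure_eq_single_le_measure_sum_eq_one {ι : Type*} [Fintype ι] [DecidableEq ι]
    {X : ι → Ω → ℕ} (hX : ∀ i, Measurable (X i)) :
    ∑ i, μ {ω | (fun j => X j ω) = Pi.single i 1} ≤ μ {ω | ∑ j, X j ω = 1} := by
  have hinj : Function.Injective fun i : ι => (Pi.single i 1 : ι → ℕ) := fun i k h => by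
    simpa [Pi.single_apply, eq_comm] using congrFun h k
  have hmeas : Measurable fun ω j => X j ω := measurable_pi_iff.2 hX
  calc ∑ i, μ {ω | (fun j => X j ω) = Pi.single i 1}
      = ∑ x ∈ univ.image (fun i : ι => (Pi.single i 1 : ι → ℕ)),
          μ ((fun ω j => X j ω) ⁻¹' {x}) := by
        rw [sum_image fun i _ k _ h => hinj h]; rfl
    _ = μ ((fun ω j => X j ω) ⁻¹' ↑(univ.image fun i : ι => (Pi.single i 1 : ι → ℕ))) :=
      sum_measure_preimage_singleton _ fun x _ => hmeas (measurableSet_singleton x)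
    _ ≤ μ {ω | ∑ j, X j ω = 1} := measure_mono fun ω hω => by
      obtain ⟨i, -, hi⟩ := mem_image.1 hω
      simp [← hi]

lemma measure_preimage_zero_of_zero_or_one [IsProbabilityMeasure μ] {X : Ω → ℕ}
    (hX : Measurable X) (h01 : ∀ ω, X ω = 0 ∨ X ω = 1) :
    μ (X ⁻¹' {0}) = 1 - μ (X ⁻¹' {1}) := by
  have : X ⁻¹' {0} = (X ⁻¹' {1})ᶜ := by
    ext ω
    rcases h01 ω with h | h <;> simp [h]
  rw [this, prob_compl_eq_one_sub (hX (measurableSet_singleton 1))]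

lemma ProbabilityTheory.iIndepFun.measure_eq_pi_single [IsProbabilityMeasure μ] {ι : Type*}
    [Fintype ι] [DecidableEq ι] {X : ι → Ω → ℕ} {p : ι → ℝ} (hX : ∀ i, Measurable (X i))
    (hind : iIndepFun X μ) (h01 : ∀ i ω, X i ω = 0 ∨ X i ω = 1)
    (hp : ∀ i, μ (X i ⁻¹' {1}) = ENNReal.ofReal (p i)) (hpI : ∀ i, p i ∈ Set.Icc (0 : ℝ) 1)
    (i : ι) :
    μ {ω | (fun j => X j ω) = Pi.single i 1} =
      ENNReal.ofReal (p i * ∏ j ∈ univ.erase i, (1 - p j)) := by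
  have hzero (j : ι) : μ (X j ⁻¹' {0}) = ENNReal.ofReal (1 - p j) := by
    rw [measure_preimage_zero_of_zero_or_one (hX j) (h01 j), hp, ENNReal.ofReal_sub _ (hpI j).1,
      ENNReal.ofReal_one]
  rw [hind.measure_eq_pi, ← mul_prod_erase _ _ (mem_univ i), ENNReal.ofReal_mul (hpI i).1,
    ENNReal.ofReal_prod_of_nonneg fun j _ => sub_nonneg.2 (hpI j).2]
  congr 1
  · simpa using hp i
  · refine prod_congr rfl fun j hj => ?_
    simpa [Pi.single_apply, ne_of_mem_erase hj] using hzero j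

end

theorem small_contention_success_general
    {Ω : Type*} [MeasurableSpace Ω] (μ : Measure Ω) [IsProbabilityMeasure μ]
    (n : ℕ) (X : Fin n → Ω → ℕ) (p : Fin n → ℝ)
    (hmeas : ∀ i, Measurable (X i))
    (hind : iIndepFun X μ)
    (h01 : ∀ i ω, X i ω = 0 ∨ X i ω = 1)
    (hp : ∀ i, μ {ω | X i ω = 1} = ENNReal.ofReal (p i))
    (hpI : ∀ i, p i ∈ Set.Icc (0 : ℝ) (1 / 2))
    (hle : ∑ i, p i ≤ 1) :
    ENNReal.ofReal ((∑ i, p i) / 4) ≤ μ {ω | (∑ i, X i ω) = 1} := by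
  have hp0 (i : Fin n) : 0 ≤ p i := (hpI i).1
  have hp1 (i : Fin n) : p i ∈ Set.Icc (0 : ℝ) 1 := ⟨hp0 i, (hpI i).2.trans (by norm_num)⟩
  have hrest (i : Fin n) : (4 : ℝ)⁻¹ ≤ ∏ j ∈ univ.erase i, (1 - p j) :=
    inv_four_le_prod_one_sub (fun j _ => hpI j)
      ((sum_le_sum_of_subset_of_nonneg (erase_subset i univ) fun j _ _ => hp0 j).trans hle)
  calc ENNReal.ofReal ((∑ i, p i) / 4) = ∑ i, ENNReal.ofReal (p i * 4⁻¹) := by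
        rw [← ENNReal.ofReal_sum_of_nonneg fun i _ => mul_nonneg (hp0 i) (by norm_num), ← sum_mul,
          div_eq_mul_inv]
    _ ≤ ∑ i, ENNReal.ofReal (p i * ∏ j ∈ univ.erase i, (1 - p j)) := by
        gcongr with i
        exacts [hp0 i, hrest i]
    _ = ∑ i, μ {ω | (fun j => X j ω) = Pi.single i 1} := by
        simp_rw [hind.measure_eq_pi_single hmeas h01 hp hp1]
    _ ≤ μ {ω | ∑ i, X i ω = 1} := sum_measure_eq_single_le_measure_sum_eq_one hmeas

/-- For independent {0,1}-valued random variables `X i` with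
`Pr[X i = 1] = p i ∈ [0, 1/2]` and `p = ∑ i, p i`, if `p ≤ 1`, then
`Pr[∑ i, X i = 1] ≥ p / 4`. -/
theorem small_contention_success
    {Ω : Type*} [MeasurableSpace Ω] (μ : Measure Ω) [IsProbabilityMeasure μ]
    (n : ℕ) (hn : 1 ≤ n) (X : Fin n → Ω → ℕ) (p : Fin n → ℝ)
    (hmeas : ∀ i, Measurable (X i))
    (hind : iIndepFun X μ)
    (h01 : ∀ i ω, X i ω = 0 ∨ X i ω = 1)
    (hp : ∀ i, μ {ω | X i ω = 1} = ENNReal.ofReal (p i))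
    (hpI : ∀ i, p i ∈ Set.Icc (0 : ℝ) (1 / 2))
    (hle : ∑ i, p i ≤ 1) :
    ENNReal.ofReal ((∑ i, p i) / 4) ≤ μ {ω | (∑ i, X i ω) = 1} :=
  small_contention_success_general μ n X p hmeas hind h01 hp hpI hle
end

section
/- Let K be a random variable on a probability space taking values in the natural numbers, let a > 1 and t ≥ 2 be real numbers, and set L = log_a(t/2). If ∑_{k ∈ ℕ, k ≤ L} Pr[K = k] · a^{−k} ≤ 1/t, then the expectation satisfies E[K] ≥ L/2. -/
open MeasureTheory ProbabilityTheory

/-!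
Since `a ^ (-k) ≥ a ^ (-L) = 2 / t` for `k ≤ L`, the hypothesis gives
`Pr[K ≤ L] * (2 / t) ≤ 1 / t`, i.e. `Pr[K ≤ L] ≤ 1 / 2`. Hence `Pr[K ≥ ⌊L⌋ + 1] ≥ 1 / 2`, and
Markov's inequality yields `E[K] ≥ (⌊L⌋ + 1) / 2 ≥ L / 2`.
-/

lemma sum_le_mul_rpow_of_sum_mul_rpow_neg_le {ι : Type*} (s : Finset ι) {p e : ι → ℝ}
    {a L c : ℝ} (hp : ∀ i ∈ s, 0 ≤ p i) (ha : 1 ≤ a) (he : ∀ i ∈ s, e i ≤ L)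
    (h : ∑ i ∈ s, p i * a ^ (-e i) ≤ c) :
    ∑ i ∈ s, p i ≤ c * a ^ L := by
  have ha0 : 0 < a := by linarith
  calc ∑ i ∈ s, p i
      ≤ ∑ i ∈ s, p i * a ^ (-e i) * a ^ L := by
        refine Finset.sum_le_sum fun i hi => ?_
        have hone : 1 ≤ a ^ (-e i) * a ^ L := by
          rw [← Real.rpow_add ha0]
          exact Real.one_le_rpow ha (by linarith [he i hi])
        rw [mul_assoc]
        exact le_mul_of_one_le_right (hp i hi) hone
    _ = (∑ i ∈ s, p i * a ^ (-e i)) * a ^ L := by rw [Finset.sum_mul]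
    _ ≤ c * a ^ L := by gcongr

section NatValued

variable {Ω : Type*} [MeasurableSpace Ω] {μ : Measure Ω} {K : Ω → ℕ}

lemma measureReal_le_eq_sum_range [IsFiniteMeasure μ] (hK : Measurable K) (n : ℕ) :
    μ.real {ω | K ω ≤ n} = ∑ k ∈ Finset.range (n + 1), μ.real {ω | K ω = k} := by
  have hset : {ω | K ω ≤ n} = K ⁻¹' ↑(Finset.range (n + 1)) := by
    ext ω
    simp
  rw [hset, ← sum_measureReal_preimage_singleton _ fun k _ => hK (measurableSet_singleton k)]
  rfl

lemma natCast_add_one_mul_measureReal_lt_le_lintegral [IsFiniteMeasure μ] (hK : Measurable K)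
    (n : ℕ) :
    ENNReal.ofReal ((n + 1) * μ.real {ω | n < K ω}) ≤ ∫⁻ ω, (K ω : ENNReal) ∂μ := by
  have hset : {ω | n < K ω} = {ω | ((n + 1 : ℕ) : ENNReal) ≤ K ω} := by
    ext ω
    simp only [Set.mem_ofPred_eq, Nat.cast_le]
    omega
  have hcoef : ENNReal.ofReal (n + 1) = ((n + 1 : ℕ) : ENNReal) := by
    exact_mod_cast ENNReal.ofReal_natCast (n + 1)
  rw [ENNReal.ofReal_mul (by positivity), ofReal_measureReal, hset, hcoef]
  exact mul_meas_ge_le_lintegral (f := fun ω => (K ω : ENNReal)) (by fun_prop) _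

end NatValued

/-- for an ℕ-valued random variable `K`, reals `a > 1` and `t ≥ 2`, and
`L = log_a (t/2)`, if `∑_{k ≤ L} Pr[K = k] * a⁻ᵏ ≤ 1/t` then `E[K] ≥ L / 2`.
(The sum over naturals `k` with `(k : ℝ) ≤ L` is the sum over `k ≤ ⌊L⌋₊`, since `L ≥ 0`.) -/
theorem expected_broadcasts_lower_bound
    {Ω : Type*} [MeasurableSpace Ω] (μ : Measure Ω) [IsProbabilityMeasure μ]
    (K : Ω → ℕ) (hK : Measurable K)
    (a t : ℝ) (ha : 1 < a) (ht : 2 ≤ t)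
    (L : ℝ) (hL : L = Real.logb a (t / 2))
    (hsum : ∑ k ∈ Finset.range (Nat.floor L + 1),
        (μ {ω | K ω = k}).toReal * a ^ (-(k : ℝ)) ≤ 1 / t) :
    ENNReal.ofReal (L / 2) ≤ ∫⁻ ω, (K ω : ENNReal) ∂μ := by
  have hL0 : 0 ≤ L := hL ▸ Real.logb_nonneg ha (by linarith)
  have haL : a ^ L = t / 2 := hL ▸ Real.rpow_logb (by linarith) ha.ne' (by linarith)
  set n := Nat.floor L
  have hle_half : μ.real {ω | K ω ≤ n} ≤ 1 / 2 := by
    have hk_le : ∀ k ∈ Finset.range (n + 1), (k : ℝ) ≤ L := fun k hk =>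
      (Nat.cast_le.2 (Nat.lt_succ_iff.1 (Finset.mem_range.1 hk))).trans (Nat.floor_le hL0)
    calc μ.real {ω | K ω ≤ n}
        = ∑ k ∈ Finset.range (n + 1), μ.real {ω | K ω = k} := measureReal_le_eq_sum_range hK n
      _ ≤ 1 / t * a ^ L := sum_le_mul_rpow_of_sum_mul_rpow_neg_le _
          (fun _ _ => measureReal_nonneg) ha.le hk_le hsum
      _ = 1 / 2 := by rw [haL]; field_simp
  have hgt_half : 1 / 2 ≤ μ.real {ω | n < K ω} := by
    have hcompl : {ω | n < K ω} = {ω | K ω ≤ n}ᶜ := by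
      ext ω
      simp
    rw [hcompl, probReal_compl_eq_one_sub (s := {ω | K ω ≤ n}) (hK measurableSet_Iic)]
    linarith
  calc ENNReal.ofReal (L / 2)
      ≤ ENNReal.ofReal ((n + 1) * μ.real {ω | n < K ω}) := by
        gcongr
        nlinarith [Nat.lt_floor_add_one L]
    _ ≤ ∫⁻ ω, (K ω : ENNReal) ∂μ := natCast_add_one_mul_measureReal_lt_le_lintegral hK n
end

section
/- Let n ≥ 1 be a natural number and let a_1, …, a_n ∈ ℕ be arrival slots. For each slot s ∈ ℕ define the contention c(s) = ∑_{i : a_i ≤ s} 1/(s − a_i + 1). Then the number of slots s ∈ ℕ with c(s) ≥ 1 is at most 2n·(ln(2n) + 1), where ln denotes the natural logarithm. -/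
/-!
Fix a window length `w` and let `m` be the number of nodes. A node that arrived at least `w`
slots before `s` sends in slot `s` with probability at most `1 / (w + 1)`, so these old nodes
contribute at most `m / (w + 1)` to the contention of `s`. A slot of contention at least
`θ > m / (w + 1)` therefore receives at least `θ - m / (w + 1)` from nodes that arrived within
the last `w` slots, while summed over all slots each node contributes only the harmonic number
`H_w` in this way. With `θ = 1` and `w = 2n` this bounds the number of high-contention slots
by `2n * H_{2n} ≤ 2n (ln (2n) + 1)`.
-/

open Finset

namespace Backoff

variable {ι : Type*} [Fintype ι] (a : ι → ℕ)

noncomputable def contention (s : ℕ) : ℝ :=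
  ∑ i ∈ univ.filter (fun i => a i ≤ s), (1 : ℝ) / ((s - a i : ℕ) + 1)

noncomputable def recentContention (w s : ℕ) : ℝ :=
  ∑ i ∈ univ.filter (fun i => s ∈ Ico (a i) (a i + w)), (1 : ℝ) / ((s - a i : ℕ) + 1)

noncomputable def oldContention (w s : ℕ) : ℝ :=
  ∑ i ∈ univ.filter (fun i => a i + w ≤ s), (1 : ℝ) / ((s - a i : ℕ) + 1)

lemma contention_eq_recentContention_add_oldContention (w s : ℕ) :
    contention a s = recentContention a w s + oldContention a w s := by
  rw [contention, ← sum_filter_add_sum_filter_not _ (fun i => s < a i + w), filter_filter,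
    filter_filter]
  congr 1 <;>
    exact sum_congr (filter_congr fun i _ => by grind) fun _ _ => rfl

lemma one_div_sub_add_one_le {t w s : ℕ} (h : t + w ≤ s) :
    (1 : ℝ) / ((s - t : ℕ) + 1) ≤ 1 / (w + 1) := by
  gcongr
  exact_mod_cast Nat.le_sub_of_add_le' h

lemma oldContention_le (w s : ℕ) : oldContention a w s ≤ Fintype.card ι / (w + 1) := by
  calc oldContention a w s
      ≤ #(univ.filter fun i => a i + w ≤ s) • ((1 : ℝ) / (w + 1)) :=
        sum_le_card_nsmul _ _ _ fun i hi => one_div_sub_add_one_le (mem_filter.1 hi).2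
    _ ≤ Fintype.card ι • ((1 : ℝ) / (w + 1)) := by
        gcongr
        exact card_filter_le _ _
    _ = Fintype.card ι / (w + 1) := by rw [nsmul_eq_mul, mul_one_div]

lemma sum_Ico_one_div_sub_add_one (t w : ℕ) :
    ∑ s ∈ Ico t (t + w), (1 : ℝ) / ((s - t : ℕ) + 1) = harmonic w := by
  rw [sum_Ico_eq_sum_range, harmonic]
  simp

lemma sum_recentContention_le (w : ℕ) (T : Finset ℕ) :
    ∑ s ∈ T, recentContention a w s ≤ Fintype.card ι * harmonic w := by
  calc ∑ s ∈ T, recentContention a w s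
      = ∑ i, ∑ s ∈ T.filter (fun s => s ∈ Ico (a i) (a i + w)),
          (1 : ℝ) / ((s - a i : ℕ) + 1) :=
        sum_comm' fun s i => by simp only [mem_filter, mem_univ, true_and]; tauto
    _ ≤ ∑ i, ∑ s ∈ Ico (a i) (a i + w), (1 : ℝ) / ((s - a i : ℕ) + 1) := by
        gcongr with i
        exact fun _ hs => (mem_filter.1 hs).2
    _ = Fintype.card ι * harmonic w := by
        simp only [sum_Ico_one_div_sub_add_one, sum_const, card_univ, nsmul_eq_mul]

variable {a}

lemma sub_le_recentContention {θ : ℝ} {s : ℕ} (w : ℕ) (hs : θ ≤ contention a s) :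
    θ - Fintype.card ι / (w + 1) ≤ recentContention a w s := by
  linarith [contention_eq_recentContention_add_oldContention a w s, oldContention_le a w s]

lemma setOf_le_contention_subset {θ : ℝ} {w : ℕ} (hθ : Fintype.card ι / (w + 1) < θ) :
    {s | θ ≤ contention a s} ⊆ ⋃ i, Set.Ico (a i) (a i + w) := by
  intro s hs
  obtain ⟨i, hi⟩ : (univ.filter fun i => s ∈ Ico (a i) (a i + w)).Nonempty := by
    rw [nonempty_iff_ne_empty]
    intro h
    have := sub_le_recentContention w hs
    rw [recentContention, h, sum_empty] at this
    linarith
  exact Set.mem_iUnion.2 ⟨i, by simpa using (mem_filter.1 hi).2⟩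

theorem finite_setOf_le_contention {θ : ℝ} {w : ℕ} (hθ : Fintype.card ι / (w + 1) < θ) :
    {s | θ ≤ contention a s}.Finite :=
  (Set.finite_iUnion fun _ => Set.finite_Ico _ _).subset (setOf_le_contention_subset hθ)

theorem ncard_setOf_le_contention_mul_le {θ : ℝ} {w : ℕ} (hθ : Fintype.card ι / (w + 1) < θ) :
    {s | θ ≤ contention a s}.ncard * (θ - Fintype.card ι / (w + 1)) ≤
      Fintype.card ι * harmonic w := by
  have hfin := finite_setOf_le_contention (a := a) hθ
  rw [Set.ncard_eq_toFinset_card _ hfin, ← nsmul_eq_mul]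
  refine (card_nsmul_le_sum _ _ _ fun s hs => ?_).trans (sum_recentContention_le a w _)
  exact sub_le_recentContention w (hfin.mem_toFinset.1 hs)

end Backoff

theorem high_contention_slots_bound_general
    (n : ℕ) (a : Fin n → ℕ)
    (c : ℕ → ℝ)
    (hc : ∀ s : ℕ, c s = ∑ i ∈ Finset.univ.filter (fun i => a i ≤ s),
        (1 : ℝ) / ((s - a i : ℕ) + 1)) :
    {s : ℕ | 1 ≤ c s}.Finite ∧
      ({s : ℕ | 1 ≤ c s}.ncard : ℝ) ≤ 2 * n * (Real.log (2 * n) + 1) := by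
  obtain rfl : c = Backoff.contention a := funext hc
  have hgap : (1 : ℝ) / 2 ≤ 1 - (Fintype.card (Fin n) : ℝ) / ((2 * n : ℕ) + 1) := by
    rw [Fintype.card_fin, le_sub_comm, div_le_iff₀ (by positivity)]
    push_cast
    linarith
  have hθ : (Fintype.card (Fin n) : ℝ) / ((2 * n : ℕ) + 1) < 1 := by linarith
  refine ⟨Backoff.finite_setOf_le_contention hθ, ?_⟩
  have hcount := Backoff.ncard_setOf_le_contention_mul_le (a := a) hθ
  have hlog : (harmonic (2 * n) : ℝ) ≤ Real.log (2 * n) + 1 := by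
    simpa [add_comm] using harmonic_le_one_add_log (2 * n)
  set N := {s | 1 ≤ Backoff.contention a s}.ncard
  rw [Fintype.card_fin] at hcount hgap
  calc (N : ℝ) = 2 * (N * (1 / 2)) := by ring
    _ ≤ 2 * (N * (1 - n / ((2 * n : ℕ) + 1))) := by gcongr
    _ ≤ 2 * (n * harmonic (2 * n)) := by gcongr
    _ ≤ 2 * (n * (Real.log (2 * n) + 1)) := by gcongr
    _ = 2 * n * (Real.log (2 * n) + 1) := by ring

/-- `n` nodes arrive at slots `a 1, …, a n` and each runs Backoff(1/x),
so that the contention of slot `s` is `c s = ∑_{i : a i ≤ s} 1 / (s - a i + 1)`. Then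
the set of slots with contention at least `1` is finite and has at most
`2n * (ln (2n) + 1)` elements. -/
theorem high_contention_slots_bound
    (n : ℕ) (hn : 1 ≤ n) (a : Fin n → ℕ)
    (c : ℕ → ℝ)
    (hc : ∀ s : ℕ, c s = ∑ i ∈ Finset.univ.filter (fun i => a i ≤ s),
        (1 : ℝ) / ((s - a i : ℕ) + 1)) :
    {s : ℕ | 1 ≤ c s}.Finite ∧
      ({s : ℕ | 1 ≤ c s}.ncard : ℝ) ≤ 2 * n * (Real.log (2 * n) + 1) :=
  high_contention_slots_bound_general n a c hc
end
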